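/- Let E be a real normed vector space, p ∈ E, and let P₁, P₂ : E →L[ℝ] ℝ be continuous linear functionals. Let e₁, e₂, e₃ : E → ℝ be differentiable at p, set e₄ = −e₁ − e₂ − e₃, and suppose at p: fderiv e₁ p = (e₁ + 2e₂ + e₃)(p) • P₁ + (e₁ + e₂ + 2e₃)(p) • P₂, fderiv e₂ p = (e₁ − e₃)(p) • P₁ + (−e₁ − e₂ − 2e₃)(p) • P₂, fderiv e₃ p = (−e₁ − 2e₂ − e₃)(p) • P₁ + (e₁ − e₂)(p) • P₂. Then the potential V = e₁² + e₂² + e₃² + (e₁ + e₂ + e₃)² satisfies fderiv V p = 4·(e₁(p) − e₃(p))·(e₂(p) − e₄(p)) • P₁ + 4·(e₁(p) − e₂(p))·(e₃(p) − e₄(p)) • P₂. -/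

import Mathlib

section

variable {𝕜 E : Type*} [NontriviallyNormedField 𝕜] [NormedAddCommGroup E] [NormedSpace 𝕜 E]
  {p : E}

theorem HasFDerivAt.sq {f : E → 𝕜} {f' : E →L[𝕜] 𝕜} (hf : HasFDerivAt f f' p) :
    HasFDerivAt (fun x => f x ^ 2) ((2 * f p) • f') p := by
  simpa [two_smul, two_mul] using hf.pow 2

theorem hasFDerivAt_sq_add_sq_add_sq_add_sq_sum {e₁ e₂ e₃ : E → 𝕜} {e₁' e₂' e₃' : E →L[𝕜] 𝕜}
    (h₁ : HasFDerivAt e₁ e₁' p) (h₂ : HasFDerivAt e₂ e₂' p) (h₃ : HasFDerivAt e₃ e₃' p) :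
    HasFDerivAt (fun x => e₁ x ^ 2 + e₂ x ^ 2 + e₃ x ^ 2 + (e₁ x + e₂ x + e₃ x) ^ 2)
      ((2 * e₁ p) • e₁' + (2 * e₂ p) • e₂' + (2 * e₃ p) • e₃'
        + (2 * (e₁ p + e₂ p + e₃ p)) • (e₁' + e₂' + e₃')) p :=
  ((h₁.sq.add h₂.sq).add h₃.sq).add ((h₁.add h₂).add h₃).sq

end

/-- N=8, D=5 supergravity, normal frame: derivative of the black-hole potential
`V = e₁² + e₂² + e₃² + (e₁+e₂+e₃)²` in terms of the vielbein functionals. -/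
theorem n8_potential_derivative {E : Type*} [NormedAddCommGroup E] [NormedSpace ℝ E]
    (p : E) (P₁ P₂ : E →L[ℝ] ℝ) (e₁ e₂ e₃ e₄ : E → ℝ)
    (he₁ : DifferentiableAt ℝ e₁ p) (he₂ : DifferentiableAt ℝ e₂ p)
    (he₃ : DifferentiableAt ℝ e₃ p)
    (he₄ : e₄ = fun x => -e₁ x - e₂ x - e₃ x)
    (de₁ : fderiv ℝ e₁ p
      = (e₁ p + 2 * e₂ p + e₃ p) • P₁ + (e₁ p + e₂ p + 2 * e₃ p) • P₂)
    (de₂ : fderiv ℝ e₂ p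
      = (e₁ p - e₃ p) • P₁ + (-e₁ p - e₂ p - 2 * e₃ p) • P₂)
    (de₃ : fderiv ℝ e₃ p
      = (-e₁ p - 2 * e₂ p - e₃ p) • P₁ + (e₁ p - e₂ p) • P₂) :
    fderiv ℝ (fun x => e₁ x ^ 2 + e₂ x ^ 2 + e₃ x ^ 2 + (e₁ x + e₂ x + e₃ x) ^ 2) p
      = (4 * (e₁ p - e₃ p) * (e₂ p - e₄ p)) • P₁
        + (4 * (e₁ p - e₂ p) * (e₃ p - e₄ p)) • P₂ := by
  rw [(hasFDerivAt_sq_add_sq_add_sq_add_sq_sum he₁.hasFDerivAt he₂.hasFDerivAt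
    he₃.hasFDerivAt).fderiv, de₁, de₂, de₃, he₄]
  module
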